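/- (Classification of non-negative domains of Maslov index one.) Let Γ be a grid diagram of size n, let x ≠ y be generators, and let D be a 2-chain connecting x to y with D(a,b) ≥ 0 for all cells and P_x(D) + P_y(D) = 1. Then D is the indicator 2-chain 1_r of a rectangle r ∈ R_{x,y}, the permutations defining x and y differ in exactly two rows, and p_p(D) = 0 for every lattice point p lying in both x and y. -/
import Mathlib


open Finset

/-- A grid diagram of size `n`: permutations `O` (white dots) and `X` (black dots)
of `ZMod n`, with `O b ≠ X b` in every row `b`. The cell `C(a,b)` in column `a` and
row `b` contains a white dot iff `a = O b` and a black dot iff `a = X b`. -/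
structure GridDiagram (n : ℕ) where
  O : Equiv.Perm (ZMod n)
  X : Equiv.Perm (ZMod n)
  ne : ∀ b, O b ≠ X b

variable {n : ℕ}

/-- Indicator function (with values in `ℤ`) of the point set
`{(σ b, b)}` of the generator given by the permutation `σ`. -/
def genInd (σ : Equiv.Perm (ZMod n)) (p : ZMod n × ZMod n) : ℤ :=
  if σ p.2 = p.1 then 1 else 0

/-- The mixed difference `δD` of a 2-chain `D` at a lattice point. -/
def mixedDiff (D : ZMod n × ZMod n → ℤ) (p : ZMod n × ZMod n) : ℤ :=
  D p - D (p.1 - 1, p.2) - D (p.1, p.2 - 1) + D (p.1 - 1, p.2 - 1)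

/-- The 2-chain `D` connects the generator `σ` to the generator `τ`. -/
abbrev Connects (D : ZMod n × ZMod n → ℤ) (σ τ : Equiv.Perm (ZMod n)) : Prop :=
  ∀ p, mixedDiff D p = genInd σ p - genInd τ p

/-- Local multiplicity `p_p(D)` of a 2-chain at a lattice point. -/
def locMult (D : ZMod n × ZMod n → ℤ) (p : ZMod n × ZMod n) : ℚ :=
  (D p + D (p.1 - 1, p.2) + D (p.1, p.2 - 1) + D (p.1 - 1, p.2 - 1)) / 4

/-- `P_x(D)`: total local multiplicity of `D` along the generator `σ`. -/
def Pgen [NeZero n] (σ : Equiv.Perm (ZMod n)) (D : ZMod n × ZMod n → ℤ) : ℚ :=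
  ∑ b : ZMod n, locMult D (σ b, b)

/-- `W(D)`: total multiplicity of `D` at the white dots. -/
def Wmult [NeZero n] (Γ : GridDiagram n) (D : ZMod n × ZMod n → ℤ) : ℤ :=
  ∑ b : ZMod n, D (Γ.O b, b)

/-- `B(D)`: total multiplicity of `D` at the black dots. -/
def Bmult [NeZero n] (Γ : GridDiagram n) (D : ZMod n × ZMod n → ℤ) : ℤ :=
  ∑ b : ZMod n, D (Γ.X b, b)

/-- Membership in the cyclic interval `[a₁, a₂) ⊆ ZMod n`. -/
abbrev inCyc (a₁ a₂ a : ZMod n) : Prop := (a - a₁).val < (a₂ - a₁).val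

/-- A quadruple `((a₁,a₂),(b₁,b₂))` determines a rectangle when both cyclic
intervals `[a₁,a₂)`, `[b₁,b₂)` are proper and nonempty. -/
abbrev IsRect (q : (ZMod n × ZMod n) × ZMod n × ZMod n) : Prop :=
  q.1.1 ≠ q.1.2 ∧ q.2.1 ≠ q.2.2

/-- Indicator 2-chain of the rectangle with column interval `[a₁,a₂)` and
row interval `[b₁,b₂)`. -/
def rectInd (q : (ZMod n × ZMod n) × ZMod n × ZMod n) (p : ZMod n × ZMod n) : ℤ :=
  if inCyc q.1.1 q.1.2 p.1 ∧ inCyc q.2.1 q.2.2 p.2 then 1 else 0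

/-- The rectangle determined by a quadruple, as its set of cells. -/
def rectCells [NeZero n] (q : (ZMod n × ZMod n) × ZMod n × ZMod n) :
    Finset (ZMod n × ZMod n) :=
  univ.filter fun p => inCyc q.1.1 q.1.2 p.1 ∧ inCyc q.2.1 q.2.2 p.2

/-- `q` determines an empty rectangle in `R_{σ,τ}`: a rectangle whose indicator
2-chain connects `σ` to `τ`, with `W(1_r) = B(1_r) = 0` and
`P_σ(1_r) + P_τ(1_r) = 1`. -/
abbrev EmptyRect [NeZero n] (Γ : GridDiagram n) (σ τ : Equiv.Perm (ZMod n))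
    (q : (ZMod n × ZMod n) × ZMod n × ZMod n) : Prop :=
  IsRect q ∧ Connects (rectInd q) σ τ ∧ Wmult Γ (rectInd q) = 0 ∧
    Bmult Γ (rectInd q) = 0 ∧ Pgen σ (rectInd q) + Pgen τ (rectInd q) = 1

/-- The number of empty rectangles in `R_{σ,τ}`. -/
def emptyRectCount [NeZero n] (Γ : GridDiagram n) (σ τ : Equiv.Perm (ZMod n)) : ℕ :=
  (univ.filter fun q : (ZMod n × ZMod n) × ZMod n × ZMod n => EmptyRect Γ σ τ q).card

/-- The differential `∂` on `C(Γ)`, the `𝔽₂`-vector space freely generated by the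
generators (elements of which are recorded as functions from generators to `ℤ/2`):
on a generator `x`, `∂x = Σ_y Σ_{empty rectangles r ∈ R_{x,y}} y`. -/
def delC [NeZero n] (Γ : GridDiagram n) (c : Equiv.Perm (ZMod n) → ZMod 2) :
    Equiv.Perm (ZMod n) → ZMod 2 :=
  fun τ => ∑ σ : Equiv.Perm (ZMod n), c σ * (emptyRectCount Γ σ τ : ZMod 2)

/-- Minus the winding number of the oriented link diagram around the lattice
point `p`, computed column by column using the representatives `{0, …, n-1}`. -/
def windA [NeZero n] (Γ : GridDiagram n) (p : ZMod n × ZMod n) : ℤ :=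
  ∑ j ∈ Finset.range p.1.val,
    (if (Γ.X.symm (j : ZMod n)).val < (Γ.O.symm (j : ZMod n)).val then (1 : ℤ) else -1) *
      (if min (Γ.X.symm (j : ZMod n)).val (Γ.O.symm (j : ZMod n)).val < p.2.val ∧
          p.2.val ≤ max (Γ.X.symm (j : ZMod n)).val (Γ.O.symm (j : ZMod n)).val
        then 1 else 0)

/-- Sum of the values of `a = windA` at the four corners of the cell `C(c)`. -/
def cornerA [NeZero n] (Γ : GridDiagram n) (c : ZMod n × ZMod n) : ℤ :=
  windA Γ c + windA Γ (c.1 + 1, c.2) + windA Γ (c.1, c.2 + 1) +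
    windA Γ (c.1 + 1, c.2 + 1)

/-- The Alexander grading
`A(x) = Σ_{p ∈ x} a(p) − (1/8)·Σ_{i,j} a(c_{i,j}) − (n−1)/2`. -/
def alexQ [NeZero n] (Γ : GridDiagram n) (σ : Equiv.Perm (ZMod n)) : ℚ :=
  ((∑ b : ZMod n, windA Γ (σ b, b) : ℤ) : ℚ) -
    (1 / 8 : ℚ) * ((∑ b : ZMod n, (cornerA Γ (Γ.O b, b) + cornerA Γ (Γ.X b, b)) : ℤ) : ℚ) -
    ((n : ℚ) - 1) / 2

/-- The differential `∂` on `C(Γ)` as a linear endomorphism over `𝔽₂ = ZMod 2`. -/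
def delL [NeZero n] (Γ : GridDiagram n) :
    (Equiv.Perm (ZMod n) → ZMod 2) →ₗ[ZMod 2] (Equiv.Perm (ZMod n) → ZMod 2) where
  toFun := delC Γ
  map_add' c₁ c₂ := by
    funext τ
    simp [delC, add_mul, Finset.sum_add_distrib]
  map_smul' m c := by
    funext τ
    simp [delC, Finset.mul_sum, mul_assoc]

/-- The dimension over `𝔽₂` of the homology `ker ∂ / im ∂` of `(C(Γ), ∂)`. -/
noncomputable def homDim [NeZero n] (Γ : GridDiagram n) : ℕ :=
  Module.finrank (ZMod 2)
    (LinearMap.ker (delL Γ) ⧸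
      Submodule.comap (LinearMap.ker (delL Γ)).subtype (LinearMap.range (delL Γ)))

/-- The subspace of `C(Γ)` spanned by the generators of Alexander grading `s`. -/
def gradedSub [NeZero n] (Γ : GridDiagram n) (s : ℚ) :
    Submodule (ZMod 2) (Equiv.Perm (ZMod n) → ZMod 2) where
  carrier := {c | ∀ σ, alexQ Γ σ ≠ s → c σ = 0}
  add_mem' := by
    intro c d hc hd σ hs
    simp [hc σ hs, hd σ hs]
  zero_mem' := by intro σ _; rfl
  smul_mem' := by
    intro m c hc σ hs
    simp [hc σ hs]

/-- The dimension over `𝔽₂` of the homology of `(C(Γ), ∂)` in Alexander grading `s`. -/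
noncomputable def gradedHomDim [NeZero n] (Γ : GridDiagram n) (s : ℚ) : ℕ :=
  Module.finrank (ZMod 2)
    (↥(LinearMap.ker (delL Γ) ⊓ gradedSub Γ s) ⧸
      Submodule.comap (LinearMap.ker (delL Γ) ⊓ gradedSub Γ s).subtype
        (Submodule.map (delL Γ) (gradedSub Γ s)))

/-- The monomial `U₁^{O₁(r)} ⋯ Uₙ^{Oₙ(r)}` attached to a rectangle, where
`O_i(r)` is the multiplicity of the rectangle at the white dot in row `i`. -/
noncomputable def rectU [NeZero n] (Γ : GridDiagram n) (q : (ZMod n × ZMod n) × ZMod n × ZMod n) :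
    MvPolynomial (ZMod n) (ZMod 2) :=
  ∏ i : ZMod n, MvPolynomial.X i ^ (rectInd q (Γ.O i, i)).toNat

/-- The differential `∂⁻` on `C⁻(Γ)`, the free `𝔽₂[U₁,…,Uₙ]`-module on the generators:
`∂⁻x = Σ_y Σ_{r ∈ R_{x,y}, P_x(1_r)+P_y(1_r)=1} U₁^{O₁(r)} ⋯ Uₙ^{Oₙ(r)} · y`. -/
noncomputable def delMinus [NeZero n] (Γ : GridDiagram n)
    (c : Equiv.Perm (ZMod n) → MvPolynomial (ZMod n) (ZMod 2)) :
    Equiv.Perm (ZMod n) → MvPolynomial (ZMod n) (ZMod 2) :=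
  fun τ => ∑ σ : Equiv.Perm (ZMod n),
    c σ * ∑ q ∈ univ.filter (fun q : (ZMod n × ZMod n) × ZMod n × ZMod n =>
        IsRect q ∧ Connects (rectInd q) σ τ ∧
          Pgen σ (rectInd q) + Pgen τ (rectInd q) = 1),
      rectU Γ q

section ClassificationHelpers

variable [NeZero n]

set_option linter.unusedSectionVars false

lemma step_const (f : ZMod n → ℤ) (h : ∀ x, f x = f (x - 1)) (x y : ZMod n) : f x = f y := by
  have key : ∀ k : ℕ, ∀ x : ZMod n, f x = f (x - k) := by
    intro k
    induction k with
    | zero => simp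
    | succ k ih =>
      intro x
      rw [ih x, h (x - k)]
      congr 1
      push_cast
      ring
  have := key (x - y).val x
  rwa [ZMod.natCast_val, ZMod.cast_id, sub_sub_cancel] at this

lemma not_inCyc_right (a₁ a₂ : ZMod n) : ¬ inCyc a₁ a₂ a₂ := lt_irrefl _

lemma inCyc_left {a₁ a₂ : ZMod n} (h : a₁ ≠ a₂) : inCyc a₁ a₂ a₁ := by
  simp only [inCyc, sub_self, ZMod.val_zero]
  exact Nat.pos_of_ne_zero fun h0 => h (sub_eq_zero.mp ((ZMod.val_eq_zero _).mp h0)).symm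

lemma jump {a₁ a₂ : ZMod n} (h : a₁ ≠ a₂) (a : ZMod n) :
    ((if inCyc a₁ a₂ a then (1:ℤ) else 0) - if inCyc a₁ a₂ (a-1) then 1 else 0)
      = (if a = a₁ then 1 else 0) - if a = a₂ then 1 else 0 := by
  have hn1 : 1 ≤ n := Nat.one_le_iff_ne_zero.mpr (NeZero.ne n)
  have hm : (a₂ - a₁) ≠ 0 := sub_ne_zero.mpr (Ne.symm h)
  have hmv : (a₂ - a₁).val ≠ 0 := fun h0 => hm ((ZMod.val_eq_zero _).mp h0)
  have hmlt : (a₂ - a₁).val < n := ZMod.val_lt _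
  have ha2 : (a = a₂) ↔ (a - a₁).val = (a₂ - a₁).val := by
    constructor
    · rintro rfl; rfl
    · intro hv
      have : a - a₁ = a₂ - a₁ := by
        have := congrArg (fun k : ℕ => (k : ZMod n)) hv
        simpa [ZMod.natCast_val, ZMod.cast_id] using this
      exact sub_left_inj.mp this
  by_cases h0 : a = a₁
  · have h1 : inCyc a₁ a₂ a := by rw [h0]; exact inCyc_left h
    have hpv : (a - 1 - a₁).val = n - 1 := by
      have he : a - 1 - a₁ = ((n - 1 : ℕ) : ZMod n) := by
        rw [Nat.cast_sub hn1, ZMod.natCast_self, h0]; ring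
      rw [he, ZMod.val_cast_of_lt (by omega)]
    have h2 : ¬ inCyc a₁ a₂ (a - 1) := by simp only [inCyc, hpv]; omega
    have h3 : a ≠ a₂ := by rw [h0]; exact h
    rw [if_pos h1, if_neg h2, if_pos h0, if_neg h3]
  · have hsv : (a - a₁).val ≠ 0 := fun hv => h0 (sub_eq_zero.mp ((ZMod.val_eq_zero _).mp hv))
    have hsvlt : (a - a₁).val < n := ZMod.val_lt _
    have hstep : a - 1 - a₁ = (((a - a₁).val - 1 : ℕ) : ZMod n) := by
      rw [Nat.cast_sub (by omega)]
      push_cast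
      rw [ZMod.natCast_val, ZMod.cast_id]
      ring
    have hpv : (a - 1 - a₁).val = (a - a₁).val - 1 := by
      rw [hstep, ZMod.val_cast_of_lt (by omega)]
    simp only [inCyc, hpv, ha2, if_neg h0]
    split_ifs <;> omega

lemma uv_decomp (D : ZMod n × ZMod n → ℤ) (h : ∀ p, mixedDiff D p = 0)
    (a₀ b₀ : ZMod n) : ∀ a b, D (a, b) = (D (a, b₀) - D (a₀, b₀)) + D (a₀, b) := by
  have hrow : ∀ b a, D (a, b) - D (a, b - 1) = D (a₀, b) - D (a₀, b - 1) := by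
    intro b a
    exact step_const (fun x => D (x, b) - D (x, b - 1))
      (fun x => by have := h (x, b); simp only [mixedDiff] at this; linarith) a a₀
  intro a b
  have := step_const (fun y => D (a, y) - D (a₀, y))
    (fun y => by have := hrow y a; linarith) b b₀
  linarith

lemma rectInd_eq_mul (a₁ a₂ b₁ b₂ a b : ZMod n) :
    rectInd ((a₁,a₂),(b₁,b₂)) (a,b)
      = (if inCyc a₁ a₂ a then (1:ℤ) else 0) * (if inCyc b₁ b₂ b then 1 else 0) := by
  by_cases h1 : inCyc a₁ a₂ a <;> by_cases h2 : inCyc b₁ b₂ b <;>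
    simp [rectInd, h1, h2]

lemma mixedDiff_rect {a₁ a₂ b₁ b₂ : ZMod n} (ha : a₁ ≠ a₂) (hb : b₁ ≠ b₂) (a b : ZMod n) :
    mixedDiff (rectInd ((a₁,a₂),(b₁,b₂))) (a,b)
      = ((if a = a₁ then (1:ℤ) else 0) - if a = a₂ then 1 else 0)
        * ((if b = b₁ then (1:ℤ) else 0) - if b = b₂ then 1 else 0) := by
  rw [← jump ha a, ← jump hb b]
  show rectInd ((a₁,a₂),(b₁,b₂)) (a,b) - rectInd ((a₁,a₂),(b₁,b₂)) (a-1,b)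
      - rectInd ((a₁,a₂),(b₁,b₂)) (a,b-1) + rectInd ((a₁,a₂),(b₁,b₂)) (a-1,b-1) = _
  rw [rectInd_eq_mul, rectInd_eq_mul, rectInd_eq_mul, rectInd_eq_mul]
  ring

lemma connects_rect {a₁ a₂ b₁ b₂ : ZMod n} (σ τ : Equiv.Perm (ZMod n))
    (ha : a₁ ≠ a₂) (hb : b₁ ≠ b₂)
    (hσ₁ : σ b₁ = a₁) (hσ₂ : σ b₂ = a₂) (hτ₁ : τ b₁ = a₂) (hτ₂ : τ b₂ = a₁)
    (hsh : ∀ b, b ≠ b₁ → b ≠ b₂ → σ b = τ b) :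
    Connects (rectInd ((a₁,a₂),(b₁,b₂))) σ τ := by
  rintro ⟨a, b⟩
  rw [mixedDiff_rect ha hb]
  show _ = (if σ b = a then (1:ℤ) else 0) - if τ b = a then 1 else 0
  by_cases h1 : b = b₁
  · subst h1
    rw [hσ₁, hτ₁, if_pos rfl, if_neg hb]
    simp only [eq_comm]
    split_ifs <;> norm_num
  · by_cases h2 : b = b₂
    · subst h2
      rw [hσ₂, hτ₂, if_neg h1, if_pos rfl]
      simp only [eq_comm]
      split_ifs <;> norm_num
    · rw [hsh b h1 h2, if_neg h1, if_neg h2]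
      simp

lemma aux_rect (σ : Equiv.Perm (ZMod n)) (D : ZMod n × ZMod n → ℤ)
    (a₁ a₂ b₁ b₂ : ZMod n) (hσ₁ : σ b₁ = a₁) (hσ₂ : σ b₂ = a₂) (u v : ZMod n → ℤ)
    (huv : ∀ a b, D (a, b) = rectInd ((a₁,a₂),(b₁,b₂)) (a,b) + u a + v b)
    (hpos : ∀ p, 0 ≤ D p)
    (hu₁ : u a₁ = 0) (hu₂ : u a₂ = 0) (hv₁ : v b₁ = 0) (hv₂ : v b₂ = 0)
    (hsh : ∀ b, b ≠ b₁ → b ≠ b₂ → D (σ b, b) = 0) :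
    ∀ p, D p = rectInd ((a₁,a₂),(b₁,b₂)) p := by
  have hRnn : ∀ p, (0:ℤ) ≤ rectInd ((a₁,a₂),(b₁,b₂)) p := fun p => by
    unfold rectInd; split <;> norm_num
  have hRr : ∀ a, rectInd ((a₁,a₂),(b₁,b₂)) (a, b₂) = 0 := fun a => by
    simp [rectInd, not_inCyc_right]
  have hRc : ∀ b, rectInd ((a₁,a₂),(b₁,b₂)) (a₂, b) = 0 := fun b => by
    simp [rectInd, not_inCyc_right]
  have hunn : ∀ a, 0 ≤ u a := fun a => by
    have h := huv a b₂; rw [hRr, hv₂] at h; have := hpos (a, b₂); linarith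
  have hvnn : ∀ b, 0 ≤ v b := fun b => by
    have h := huv a₂ b; rw [hRc, hu₂] at h; have := hpos (a₂, b); linarith
  have hv0 : ∀ b, v b = 0 := by
    intro b
    by_cases h1 : b = b₁
    · rw [h1, hv₁]
    by_cases h2 : b = b₂
    · rw [h2, hv₂]
    have h := huv (σ b) b
    rw [hsh b h1 h2] at h
    have := hRnn (σ b, b); have := hunn (σ b); have := hvnn b; linarith
  have hu0 : ∀ a, u a = 0 := by
    intro a
    rcases eq_or_ne (σ.symm a) b₁ with h1 | h1
    · have : a = a₁ := by rw [← hσ₁, ← h1, σ.apply_symm_apply]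
      rw [this, hu₁]
    rcases eq_or_ne (σ.symm a) b₂ with h2 | h2
    · have : a = a₂ := by rw [← hσ₂, ← h2, σ.apply_symm_apply]
      rw [this, hu₂]
    have h := huv a (σ.symm a)
    have hDa := hsh (σ.symm a) h1 h2
    rw [σ.apply_symm_apply] at hDa
    rw [hDa, hv0] at h
    have := hRnn (a, σ.symm a); have := hunn a; linarith
  rintro ⟨a, b⟩
  rw [huv a b, hu0, hv0, add_zero, add_zero]

lemma Pgen_eq (σ : Equiv.Perm (ZMod n)) (D : ZMod n × ZMod n → ℤ) :
    Pgen σ D = ((∑ b : ZMod n, (D (σ b, b) + D (σ b - 1, b) + D (σ b, b - 1)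
      + D (σ b - 1, b - 1)) : ℤ) : ℚ) / 4 := by
  unfold Pgen locMult
  rw [← Finset.sum_div]
  congr 1
  push_cast
  rfl

lemma card_le_two (g : ZMod n → ℤ) (S : Finset (ZMod n)) (hnn : ∀ b, 0 ≤ g b)
    (hS : ∀ b ∈ S, 2 ≤ g b) (hsum : ∑ b : ZMod n, g b = 4) : S.card ≤ 2 := by
  have h1 : (S.card : ℤ) * 2 ≤ ∑ b ∈ S, g b := by
    have := Finset.card_nsmul_le_sum S g 2 hS
    simpa [nsmul_eq_mul] using this
  have h2 : ∑ b ∈ S, g b ≤ 4 := by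
    rw [← hsum]
    exact Finset.sum_le_sum_of_subset_of_nonneg (Finset.subset_univ S)
      (fun i _ _ => hnn i)
  have : (S.card : ℤ) ≤ 2 := by linarith
  exact_mod_cast this

lemma budget_extract (g : ZMod n → ℤ) (b₁ b₂ : ZMod n) (hb : b₁ ≠ b₂)
    (hnn : ∀ b, 0 ≤ g b) (h2 : 2 ≤ g b₁) (h2' : 2 ≤ g b₂)
    (hsum : ∑ b : ZMod n, g b = 4) :
    g b₁ = 2 ∧ g b₂ = 2 ∧ ∀ b, b ≠ b₁ → b ≠ b₂ → g b = 0 := by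
  have hsplit : ∑ b ∈ Finset.univ \ {b₁, b₂}, g b + ∑ b ∈ ({b₁, b₂} : Finset (ZMod n)), g b
      = ∑ b : ZMod n, g b := Finset.sum_sdiff (Finset.subset_univ _)
  have hpairsum : ∑ b ∈ ({b₁, b₂} : Finset (ZMod n)), g b = g b₁ + g b₂ :=
    Finset.sum_pair hb
  have hrest_nonneg : 0 ≤ ∑ b ∈ Finset.univ \ {b₁, b₂}, g b :=
    Finset.sum_nonneg fun i _ => hnn i
  have hrest : ∑ b ∈ Finset.univ \ {b₁, b₂}, g b = 0 := by
    rw [hsum, hpairsum] at hsplit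
    linarith
  have hzero := (Finset.sum_eq_zero_iff_of_nonneg (fun i _ => hnn i)).mp hrest
  refine ⟨by rw [hsum, hpairsum, hrest] at hsplit; linarith,
    by rw [hsum, hpairsum, hrest] at hsplit; linarith, fun b hb1 hb2 => ?_⟩
  exact hzero b (by simp [Finset.mem_sdiff, hb1, hb2])

end ClassificationHelpers

/-- **Classification of non-negative domains of Maslov index one.**
If `σ ≠ τ` and `D` is a 2-chain connecting `σ` to `τ` with non-negative
multiplicities and `P_σ(D) + P_τ(D) = 1`, then `D` is the indicator 2-chain of a
rectangle in `R_{σ,τ}`, the permutations `σ` and `τ` differ in exactly two rows,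
and the local multiplicity of `D` vanishes at every point common to `σ` and `τ`. -/
theorem nonneg_maslov_one_domain_is_rectangle (n : ℕ) [NeZero n] (hn : 2 ≤ n)
    (Γ : GridDiagram n) (σ τ : Equiv.Perm (ZMod n)) (hστ : σ ≠ τ)
    (D : ZMod n × ZMod n → ℤ) (hconn : Connects D σ τ)
    (hpos : ∀ p, 0 ≤ D p) (hmas : Pgen σ D + Pgen τ D = 1) :
    (∃ q : (ZMod n × ZMod n) × ZMod n × ZMod n,
      IsRect q ∧ Connects (rectInd q) σ τ ∧ D = rectInd q) ∧
    (Finset.univ.filter fun b : ZMod n => σ b ≠ τ b).card = 2 ∧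
    (∀ b : ZMod n, σ b = τ b → locMult D (σ b, b) = 0) := by
  classical
  have hbudget : ∑ b : ZMod n,
      ((D (σ b, b) + D (σ b - 1, b) + D (σ b, b - 1) + D (σ b - 1, b - 1))
        + (D (τ b, b) + D (τ b - 1, b) + D (τ b, b - 1) + D (τ b - 1, b - 1))) = 4 := by
    rw [Pgen_eq σ D, Pgen_eq τ D] at hmas
    rw [Finset.sum_add_distrib]
    exact_mod_cast (by linarith :
      ((∑ b : ZMod n, (D (σ b, b) + D (σ b - 1, b) + D (σ b, b - 1) + D (σ b - 1, b - 1)) : ℤ) : ℚ)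
        + ((∑ b : ZMod n, (D (τ b, b) + D (τ b - 1, b) + D (τ b, b - 1) + D (τ b - 1, b - 1)) : ℤ) : ℚ) = 4)
  have hδσ : ∀ b, σ b ≠ τ b → mixedDiff D (σ b, b) = 1 := by
    intro b hb
    have h := hconn (σ b, b)
    simpa [genInd, Ne.symm hb] using h
  have hδτ : ∀ b, σ b ≠ τ b → mixedDiff D (τ b, b) = -1 := by
    intro b hb
    have h := hconn (τ b, b)
    simpa [genInd, hb] using h
  have hXnn : ∀ (ρ : Equiv.Perm (ZMod n)) (b : ZMod n),
      0 ≤ D (ρ b, b) + D (ρ b - 1, b) + D (ρ b, b - 1) + D (ρ b - 1, b - 1) := by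
    intro ρ b
    have := hpos (ρ b, b); have := hpos (ρ b - 1, b)
    have := hpos (ρ b, b - 1); have := hpos (ρ b - 1, b - 1)
    linarith
  have hkey : ∀ b, σ b ≠ τ b →
      1 ≤ D (σ b, b) + D (σ b - 1, b) + D (σ b, b - 1) + D (σ b - 1, b - 1) ∧
      1 ≤ D (τ b, b) + D (τ b - 1, b) + D (τ b, b - 1) + D (τ b - 1, b - 1) := by
    intro b hb
    have h1 := hδσ b hb; have h2 := hδτ b hb
    simp only [mixedDiff] at h1 h2
    have := hpos (σ b - 1, b); have := hpos (σ b, b - 1)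
    have := hpos (τ b, b); have := hpos (τ b - 1, b - 1)
    constructor <;> linarith
  obtain ⟨b₁, hb₁⟩ : ∃ b, σ b ≠ τ b := by
    by_contra h
    push_neg at h
    exact hστ (Equiv.ext h)
  set b₂ := τ.symm (σ b₁) with hb₂def
  have hτ₂ : τ b₂ = σ b₁ := τ.apply_symm_apply _
  have hb12 : b₁ ≠ b₂ := by
    intro h
    apply hb₁
    conv_rhs => rw [h]
    rw [hτ₂]
  have hb₂ : σ b₂ ≠ τ b₂ := by
    rw [hτ₂]
    exact fun hh => hb12 (σ.injective hh).symm
  have hnn' : ∀ b, (0:ℤ) ≤ (D (σ b, b) + D (σ b - 1, b) + D (σ b, b - 1) + D (σ b - 1, b - 1))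
      + (D (τ b, b) + D (τ b - 1, b) + D (τ b, b - 1) + D (τ b - 1, b - 1)) := by
    intro b
    have := hXnn σ b; have := hXnn τ b
    linarith
  have hcard_le : (Finset.univ.filter fun b : ZMod n => σ b ≠ τ b).card ≤ 2 := by
    refine card_le_two _ _ hnn' (fun b hb => ?_) hbudget
    have hb' : σ b ≠ τ b := (Finset.mem_filter.mp hb).2
    have := hkey b hb'
    linarith [this.1, this.2]
  have hsub : ({b₁, b₂} : Finset (ZMod n)) ⊆ Finset.univ.filter fun b => σ b ≠ τ b := by
    intro b hb
    simp only [Finset.mem_insert, Finset.mem_singleton] at hb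
    rcases hb with rfl | rfl <;> simp [Finset.mem_filter, hb₁, hb₂]
  have hSeq0 : ({b₁, b₂} : Finset (ZMod n)) = Finset.univ.filter fun b => σ b ≠ τ b :=
    Finset.eq_of_subset_of_card_le hsub (by rw [Finset.card_pair hb12]; exact hcard_le)
  have hcard2 : (Finset.univ.filter fun b : ZMod n => σ b ≠ τ b).card = 2 := by
    rw [← hSeq0]; exact Finset.card_pair hb12
  have hshared : ∀ b, b ≠ b₁ → b ≠ b₂ → σ b = τ b := by
    intro b h1 h2
    by_contra h
    have hbmem : b ∈ Finset.univ.filter fun b => σ b ≠ τ b :=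
      Finset.mem_filter.mpr ⟨Finset.mem_univ b, h⟩
    rw [← hSeq0] at hbmem
    simp only [Finset.mem_insert, Finset.mem_singleton] at hbmem
    tauto
  have hτ₁ : τ b₁ = σ b₂ := by
    have hc : σ.symm (τ b₁) = b₂ := by
      by_contra hc
      have hσc : σ (σ.symm (τ b₁)) = τ b₁ := σ.apply_symm_apply _
      have hcb₁ : σ.symm (τ b₁) ≠ b₁ := by
        intro h
        apply hb₁
        rw [← hσc, h]
      have hsh := hshared _ hcb₁ hc
      rw [hσc] at hsh
      exact hcb₁ (τ.injective hsh).symm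
    rw [← hc, σ.apply_symm_apply]
  have ha : σ b₁ ≠ σ b₂ := fun h => hb12 (σ.injective h)
  -- extract exact budget values
  obtain ⟨hgb₁, hgb₂, hg0⟩ := budget_extract _ b₁ b₂ hb12 hnn'
    (by have := hkey b₁ hb₁; linarith [this.1, this.2])
    (by have := hkey b₂ hb₂; linarith [this.1, this.2]) hbudget
  have hkey₁ := hkey b₁ hb₁
  have hkey₂ := hkey b₂ hb₂
  have hSX₁ : D (σ b₁, b₁) + D (σ b₁ - 1, b₁) + D (σ b₁, b₁ - 1) + D (σ b₁ - 1, b₁ - 1) = 1 := by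
    linarith [hkey₁.1, hkey₁.2, hgb₁]
  have hSY₁ : D (τ b₁, b₁) + D (τ b₁ - 1, b₁) + D (τ b₁, b₁ - 1) + D (τ b₁ - 1, b₁ - 1) = 1 := by
    linarith [hkey₁.1, hkey₁.2, hgb₁]
  have hSX₂ : D (σ b₂, b₂) + D (σ b₂ - 1, b₂) + D (σ b₂, b₂ - 1) + D (σ b₂ - 1, b₂ - 1) = 1 := by
    linarith [hkey₂.1, hkey₂.2, hgb₂]
  have hSY₂ : D (τ b₂, b₂) + D (τ b₂ - 1, b₂) + D (τ b₂, b₂ - 1) + D (τ b₂ - 1, b₂ - 1) = 1 := by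
    linarith [hkey₂.1, hkey₂.2, hgb₂]
  have hδ₁ := hδσ b₁ hb₁
  have hδ₂ := hδσ b₂ hb₂
  have hδy₁ := hδτ b₁ hb₁
  have hδy₂ := hδτ b₂ hb₂
  simp only [mixedDiff] at hδ₁ hδ₂ hδy₁ hδy₂
  rw [hτ₁] at hSY₁ hδy₁
  rw [hτ₂] at hSY₂ hδy₂
  have hcells₁ : D (σ b₁ - 1, b₁) = 0 ∧ D (σ b₁, b₁ - 1) = 0 := by
    have := hpos (σ b₁ - 1, b₁); have := hpos (σ b₁, b₁ - 1)
    have := hpos (σ b₁, b₁); have := hpos (σ b₁ - 1, b₁ - 1)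
    constructor <;> linarith
  have hcells₂ : D (σ b₂ - 1, b₂) = 0 ∧ D (σ b₂, b₂ - 1) = 0 := by
    have := hpos (σ b₂ - 1, b₂); have := hpos (σ b₂, b₂ - 1)
    have := hpos (σ b₂, b₂); have := hpos (σ b₂ - 1, b₂ - 1)
    constructor <;> linarith
  have hycells₁ : D (σ b₂, b₁) = 0 ∧ D (σ b₂ - 1, b₁ - 1) = 0 := by
    have := hpos (σ b₂, b₁); have := hpos (σ b₂ - 1, b₁ - 1)
    have := hpos (σ b₂ - 1, b₁); have := hpos (σ b₂, b₁ - 1)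
    constructor <;> linarith
  have hycells₂ : D (σ b₁, b₂) = 0 ∧ D (σ b₁ - 1, b₂ - 1) = 0 := by
    have := hpos (σ b₁, b₂); have := hpos (σ b₁ - 1, b₂ - 1)
    have := hpos (σ b₁ - 1, b₂); have := hpos (σ b₁, b₂ - 1)
    constructor <;> linarith
  have hsh0 : ∀ b, b ≠ b₁ → b ≠ b₂ →
      D (σ b, b) = 0 ∧ D (σ b - 1, b) = 0 ∧ D (σ b, b - 1) = 0 ∧ D (σ b - 1, b - 1) = 0 := by
    intro b h1 h2
    have hg := hg0 b h1 h2
    have := hXnn σ b; have := hXnn τ b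
    have := hpos (σ b, b); have := hpos (σ b - 1, b)
    have := hpos (σ b, b - 1); have := hpos (σ b - 1, b - 1)
    refine ⟨by linarith, by linarith, by linarith, by linarith⟩
  have hCR₁ : Connects (rectInd ((σ b₁, σ b₂), (b₁, b₂))) σ τ :=
    connects_rect σ τ ha hb12 rfl rfl hτ₁ hτ₂ hshared
  have hmd0 : ∀ p, mixedDiff (fun p => D p - rectInd ((σ b₁, σ b₂), (b₁, b₂)) p) p = 0 := by
    intro p
    have h1 := hconn p; have h2 := hCR₁ p
    simp only [mixedDiff] at h1 h2 ⊢
    linarith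
  have huv := uv_decomp _ hmd0 (σ b₂) b₂
  have hRr : ∀ a, rectInd ((σ b₁, σ b₂), (b₁, b₂)) (a, b₂) = 0 := fun a => by
    simp [rectInd, not_inCyc_right]
  have hRc : ∀ b, rectInd ((σ b₁, σ b₂), (b₁, b₂)) (σ b₂, b) = 0 := fun b => by
    simp [rectInd, not_inCyc_right]
  have hR11 : rectInd ((σ b₁, σ b₂), (b₁, b₂)) (σ b₁, b₁) = 1 := by
    unfold rectInd
    exact if_pos ⟨inCyc_left ha, inCyc_left hb12⟩
  have huv' : ∀ a b, D (a, b) = rectInd ((σ b₁, σ b₂), (b₁, b₂)) (a, b)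
      + (D (a, b₂) - D (σ b₂, b₂)) + D (σ b₂, b) := by
    intro a b
    have h := huv a b
    have e1 := hRr a; have e2 := hRc b₂; have e3 := hRc b
    linarith
  have hA : D (σ b₁, b₁) = 1 - D (σ b₂, b₂) := by
    have h := huv' (σ b₁) b₁
    rw [hR11, hycells₂.1, hycells₁.1] at h
    linarith
  have ht : D (σ b₂, b₂) = 0 ∨ D (σ b₂, b₂) = 1 := by
    have := hpos (σ b₂, b₂); have := hpos (σ b₁, b₁)
    omega
  have hloc : ∀ b : ZMod n, σ b = τ b → locMult D (σ b, b) = 0 := by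
    intro b hb
    have h1 : b ≠ b₁ := by rintro rfl; exact hb₁ hb
    have h2 : b ≠ b₂ := by rintro rfl; exact hb₂ hb
    obtain ⟨z1, z2, z3, z4⟩ := hsh0 b h1 h2
    simp [locMult, z1, z2, z3, z4]
  refine ⟨?_, hcard2, hloc⟩
  rcases ht with ht | ht
  · refine ⟨((σ b₁, σ b₂), (b₁, b₂)), ⟨ha, hb12⟩, hCR₁, ?_⟩
    funext p
    obtain ⟨a, b⟩ := p
    exact aux_rect σ D (σ b₁) (σ b₂) b₁ b₂ rfl rfl
      (fun a => D (a, b₂) - D (σ b₂, b₂)) (fun b => D (σ b₂, b)) huv' hpos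
      (by show D (σ b₁, b₂) - D (σ b₂, b₂) = 0; rw [hycells₂.1, ht]; ring)
      (by show D (σ b₂, b₂) - D (σ b₂, b₂) = 0; ring)
      (by show D (σ b₂, b₁) = 0; exact hycells₁.1)
      (by show D (σ b₂, b₂) = 0; exact ht)
      (fun b h1 h2 => (hsh0 b h1 h2).1) (a, b)
  · have hCR₂ : Connects (rectInd ((σ b₂, σ b₁), (b₂, b₁))) σ τ :=
      connects_rect σ τ (Ne.symm ha) (Ne.symm hb12) rfl rfl hτ₂ hτ₁
        (fun b h2 h1 => hshared b h1 h2)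
    have hmd0₂ : ∀ p, mixedDiff (fun p => D p - rectInd ((σ b₂, σ b₁), (b₂, b₁)) p) p = 0 := by
      intro p
      have h1 := hconn p; have h2 := hCR₂ p
      simp only [mixedDiff] at h1 h2 ⊢
      linarith
    have huv₂ := uv_decomp _ hmd0₂ (σ b₁) b₁
    have hRr₂ : ∀ a, rectInd ((σ b₂, σ b₁), (b₂, b₁)) (a, b₁) = 0 := fun a => by
      simp [rectInd, not_inCyc_right]
    have hRc₂ : ∀ b, rectInd ((σ b₂, σ b₁), (b₂, b₁)) (σ b₁, b) = 0 := fun b => by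
      simp [rectInd, not_inCyc_right]
    have hA0 : D (σ b₁, b₁) = 0 := by rw [hA, ht]; ring
    have huv₂' : ∀ a b, D (a, b) = rectInd ((σ b₂, σ b₁), (b₂, b₁)) (a, b)
        + (D (a, b₁) - D (σ b₁, b₁)) + D (σ b₁, b) := by
      intro a b
      have h := huv₂ a b
      have e1 := hRr₂ a; have e2 := hRc₂ b₁; have e3 := hRc₂ b
      linarith
    refine ⟨((σ b₂, σ b₁), (b₂, b₁)), ⟨Ne.symm ha, Ne.symm hb12⟩, hCR₂, ?_⟩
    funext p
    obtain ⟨a, b⟩ := p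
    exact aux_rect σ D (σ b₂) (σ b₁) b₂ b₁ rfl rfl
      (fun a => D (a, b₁) - D (σ b₁, b₁)) (fun b => D (σ b₁, b)) huv₂' hpos
      (by show D (σ b₂, b₁) - D (σ b₁, b₁) = 0; rw [hycells₁.1, hA0]; ring)
      (by show D (σ b₁, b₁) - D (σ b₁, b₁) = 0; ring)
      (by show D (σ b₁, b₂) = 0; exact hycells₂.1)
      (by show D (σ b₁, b₁) = 0; exact hA0)
      (fun b h2 h1 => (hsh0 b h1 h2).1) (a, b)
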